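/- Let n : ℕ, G = (Fin n → ZMod 2), d = 2^n, and H the Walsh–Hadamard matrix on G. Let x y : G → ℝ with every coordinate of H.mulVec y nonzero, and set y† = (1/d) • H.mulVec ((H.mulVec y)⁻¹), where ⁻¹ is coordinatewise inversion. Then unbinding exactly inverts binding: B(B(x, y), y†) = x. -/

import Mathlib

/-- The Walsh–Hadamard matrix on `(Fin n → ZMod 2)`, defined by the sign character pairing. -/
noncomputable def WH (n : ℕ) : Matrix (Fin n → ZMod 2) (Fin n → ZMod 2) ℝ :=
  fun x y => (-1 : ℝ) ^ (∑ i, (x i * y i).val)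

/-- The HLB binding `B(u, v) = (1/d) • H (H u ⊙ H v)`, with `⊙` pointwise product. -/
noncomputable def hB (n : ℕ) (u v : (Fin n → ZMod 2) → ℝ) : (Fin n → ZMod 2) → ℝ :=
  ((1 : ℝ) / (2 ^ n)) • (WH n).mulVec ((WH n).mulVec u * (WH n).mulVec v)

lemma neg_one_pow_val_add (a b : ZMod 2) :
    ((-1:ℝ))^(a+b).val = (-1)^a.val * (-1)^b.val := by
  have h : ∀ a b : ZMod 2, (a+b).val = (a.val + b.val) % 2 := by decide
  rw [h, ← neg_one_pow_eq_pow_mod_two, pow_add]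

lemma char_sum (n : ℕ) (w : Fin n → ZMod 2) :
    ∑ y : Fin n → ZMod 2, ∏ i, ((-1:ℝ))^(w i * y i).val
      = if w = 0 then (2:ℝ)^n else 0 := by
  have h := Finset.prod_univ_sum (fun _ : Fin n => (Finset.univ : Finset (ZMod 2)))
    (fun i b => ((-1:ℝ))^(w i * b).val)
  rw [Fintype.piFinset_univ] at h
  rw [← h]
  have hinner : ∀ i, ∑ b : ZMod 2, ((-1:ℝ))^(w i * b).val
      = if w i = 0 then 2 else 0 := by
    intro i
    have h2 : ∑ b : ZMod 2, ((-1:ℝ))^(w i * b).val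
        = ((-1:ℝ))^(w i * 0).val + ((-1:ℝ))^(w i * 1).val :=
      Fin.sum_univ_two _
    rw [h2, mul_zero, mul_one]
    have hcases : ∀ a : ZMod 2, a = 0 ∨ a = 1 := by decide
    rcases hcases (w i) with h' | h'
    · simp [h', show ZMod.val (0:ZMod 2) = 0 from rfl]
      norm_num
    · simp [h', show ZMod.val (1:ZMod 2) = 1 from rfl]
  simp_rw [hinner]
  by_cases hw : w = 0
  · simp [hw]
  · obtain ⟨i, hi⟩ : ∃ i, w i ≠ 0 := by
      by_contra h'
      push_neg at h'
      exact hw (funext h')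
    rw [if_neg hw]
    exact Finset.prod_eq_zero (Finset.mem_univ i) (by simp [hi])

lemma WH_mul (n : ℕ) (z y w : Fin n → ZMod 2) :
    WH n z w * WH n w y = ∏ i, ((-1:ℝ))^((z + y) i * w i).val := by
  simp only [WH]
  rw [← Finset.prod_pow_eq_pow_sum, ← Finset.prod_pow_eq_pow_sum, ← Finset.prod_mul_distrib]
  refine Finset.prod_congr rfl fun i _ => ?_
  rw [Pi.add_apply, add_mul, neg_one_pow_val_add, mul_comm (w i) (y i)]

lemma WH_WH (n : ℕ) (u : (Fin n → ZMod 2) → ℝ) :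
    (WH n).mulVec ((WH n).mulVec u) = ((2:ℝ)^n) • u := by
  funext z
  have e1 : (WH n).mulVec ((WH n).mulVec u) z
      = ∑ w, ∑ y', WH n z w * WH n w y' * u y' := by
    simp [Matrix.mulVec, dotProduct, Finset.mul_sum, mul_assoc]
  rw [e1, Finset.sum_comm]
  have e2 : ∀ y', ∑ w, WH n z w * WH n w y' * u y'
      = (if z + y' = 0 then (2:ℝ)^n else 0) * u y' := by
    intro y'
    rw [← Finset.sum_mul]
    congr 1
    calc ∑ w, WH n z w * WH n w y'
        = ∑ w, ∏ i, ((-1:ℝ))^((z + y') i * w i).val :=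
          Finset.sum_congr rfl fun w _ => WH_mul n z y' w
      _ = _ := char_sum n (z + y')
  simp_rw [e2]
  have hzy : ∀ y' : Fin n → ZMod 2, (z + y' = 0) ↔ (y' = z) := by
    intro y'
    constructor
    · intro h
      funext i
      have h2 := congrFun h i
      have h3 : ∀ a b : ZMod 2, a + b = 0 → b = a := by decide
      exact h3 _ _ h2
    · rintro rfl
      funext i
      exact (by decide : ∀ a : ZMod 2, a + a = 0) _
  simp [hzy, ite_mul]

/-- Unbinding with the Hadamard-domain inverse exactly inverts binding. -/
theorem stmt4 (n : ℕ) (x y : (Fin n → ZMod 2) → ℝ)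
    (hy : ∀ z, (WH n).mulVec y z ≠ 0) :
    hB n (hB n x y) (((1 : ℝ) / (2 ^ n)) • (WH n).mulVec (((WH n).mulVec y)⁻¹)) = x := by
  have hd : ((2:ℝ)^n) ≠ 0 := by positivity
  have h1 : (WH n).mulVec (hB n x y) = (WH n).mulVec x * (WH n).mulVec y := by
    unfold hB
    rw [Matrix.mulVec_smul, WH_WH, smul_smul, one_div, inv_mul_cancel₀ hd, one_smul]
  have h2 : (WH n).mulVec (((1 : ℝ) / (2 ^ n)) • (WH n).mulVec (((WH n).mulVec y)⁻¹))
      = ((WH n).mulVec y)⁻¹ := by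
    rw [Matrix.mulVec_smul, WH_WH, smul_smul, one_div, inv_mul_cancel₀ hd, one_smul]
  rw [hB, h1, h2]
  have h3 : ((WH n).mulVec x * (WH n).mulVec y) * ((WH n).mulVec y)⁻¹
      = (WH n).mulVec x := by
    funext z
    exact mul_inv_cancel_right₀ (hy z) _
  rw [h3, WH_WH, smul_smul, one_div, inv_mul_cancel₀ hd, one_smul]
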